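/- arXiv:2002.03460 — 4 statements merged into one kernel-verified Lean document; each statement's English description precedes it below -/
import Mathlib

section
/- Let A be an invertible real n×n matrix, b, v ∈ ℝⁿ, and g, s, h real scalars with 0 < s ≤ 1 and g·(vᵀA⁻¹b) ≤ 0. If (Δu, Δp) ∈ ℝⁿ × ℝ satisfies A Δu + b Δp = 0 and g(1−s) vᵀ Δu + s Δp = h, then Δp and h have the same sign: Δp · h ≥ 0, with Δp · h > 0 whenever h ≠ 0. -/
open Matrix

/-- Remark 2 of the paper: the parameter increment `Δp` produced by the augmented
system has the same sign as the prescribed step-size `h`: `Δp · h ≥ 0`, and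
`Δp · h > 0` whenever `h ≠ 0`. -/
theorem parameter_increment_same_sign (n : ℕ)
    (A : Matrix (Fin n) (Fin n) ℝ) (hA : IsUnit A.det)
    (b v : Fin n → ℝ) (g s h : ℝ)
    (hs0 : 0 < s) (hs1 : s ≤ 1)
    (hg : g * (v ⬝ᵥ A⁻¹.mulVec b) ≤ 0)
    (Δu : Fin n → ℝ) (Δp : ℝ)
    (h1 : A.mulVec Δu + Δp • b = 0)
    (h2 : g * (1 - s) * (v ⬝ᵥ Δu) + s * Δp = h) :
    Δp * h ≥ 0 ∧ (h ≠ 0 → Δp * h > 0) := by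
  have hDu : Δu = -(Δp • A⁻¹.mulVec b) := by
    have hAu : A.mulVec Δu = -(Δp • b) := by
      have := h1
      linear_combination (norm := module) this
    have := congrArg (A⁻¹.mulVec ·) hAu
    simpa [Matrix.mulVec_mulVec, Matrix.nonsing_inv_mul A hA, Matrix.mulVec_neg,
      Matrix.mulVec_smul] using this
  have hvDu : v ⬝ᵥ Δu = -(Δp * (v ⬝ᵥ A⁻¹.mulVec b)) := by
    rw [hDu]
    simp [dotProduct_neg, dotProduct_smul, smul_eq_mul]
  set c : ℝ := s - g * (1 - s) * (v ⬝ᵥ A⁻¹.mulVec b) with hc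
  have hcpos : 0 < c := by
    have h1s : (0:ℝ) ≤ 1 - s := by linarith
    have : g * (1 - s) * (v ⬝ᵥ A⁻¹.mulVec b) ≤ 0 := by
      have := mul_nonneg h1s (neg_nonneg.mpr hg)
      nlinarith
    simp only [hc]; linarith
  have hh : h = Δp * c := by
    rw [← h2, hvDu, hc]; ring
  constructor
  · rw [hh]
    have := mul_self_nonneg Δp
    nlinarith
  · intro hne
    have hΔp : Δp ≠ 0 := by
      intro h0; apply hne; rw [hh, h0, zero_mul]
    rw [hh]
    have hsq : 0 < Δp * Δp := mul_self_pos.mpr hΔp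
    nlinarith
end

section
/- Let S be a real symmetric positive semi-definite n×n matrix, let λ ≥ 0 be its smallest eigenvalue (so that aᵀ S a ≥ λ ‖a‖² for all a ∈ ℝⁿ), and let v be a unit vector with S v = λ v. Then for all a ∈ ℝⁿ and b ∈ ℝ, aᵀ S a + 2 λ b (vᵀ a) + λ b² ≥ λ (‖a‖ − |b|)² ≥ 0. -/
open Matrix

/-- The chain of estimates used in the paper to prove that the inflated
coefficient matrix is positive semi-definite: for a symmetric positive
semi-definite `S` with smallest eigenvalue `λ ≥ 0` and unit eigenvector `v`,
`aᵀ S a + 2 λ b (vᵀ a) + λ b² ≥ λ (‖a‖ − |b|)² ≥ 0`. -/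
theorem inflated_quadratic_form_lower_bound (n : ℕ)
    (S : Matrix (Fin n) (Fin n) ℝ) (hS : S.IsSymm)
    (hpsd : ∀ a : Fin n → ℝ, 0 ≤ a ⬝ᵥ S.mulVec a)
    (lam : ℝ) (hlam : 0 ≤ lam)
    (hmin : ∀ a : Fin n → ℝ, lam * (Real.sqrt (a ⬝ᵥ a)) ^ 2 ≤ a ⬝ᵥ S.mulVec a)
    (v : Fin n → ℝ) (hv : v ⬝ᵥ v = 1) (hev : S.mulVec v = lam • v) :
    ∀ (a : Fin n → ℝ) (b : ℝ),
      lam * (Real.sqrt (a ⬝ᵥ a) - |b|) ^ 2 ≤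
          a ⬝ᵥ S.mulVec a + 2 * lam * b * (v ⬝ᵥ a) + lam * b ^ 2 ∧
        0 ≤ lam * (Real.sqrt (a ⬝ᵥ a) - |b|) ^ 2 := by
  intro a b
  have haa : 0 ≤ a ⬝ᵥ a := by
    unfold dotProduct
    exact Finset.sum_nonneg fun i _ => mul_self_nonneg _
  set t := Real.sqrt (a ⬝ᵥ a) with ht
  have ht0 : 0 ≤ t := Real.sqrt_nonneg _
  have ht2 : t ^ 2 = a ⬝ᵥ a := Real.sq_sqrt haa
  have hcs : (v ⬝ᵥ a) ^ 2 ≤ (v ⬝ᵥ v) * (a ⬝ᵥ a) := by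
    unfold dotProduct
    simpa [pow_two] using
      Finset.sum_mul_sq_le_sq_mul_sq Finset.univ v a
  have hcs' : (v ⬝ᵥ a) ^ 2 ≤ t ^ 2 := by rw [ht2]; simpa [hv] using hcs
  have habs : |v ⬝ᵥ a| ≤ t := by
    rw [← Real.sqrt_sq_eq_abs, ← Real.sqrt_sq ht0]
    exact Real.sqrt_le_sqrt hcs'
  have hmin' := hmin a
  constructor
  · have h1 : |b| * |v ⬝ᵥ a| ≤ |b| * t :=
      mul_le_mul_of_nonneg_left habs (abs_nonneg b)
    have h2 : -(|b| * t) ≤ b * (v ⬝ᵥ a) := by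
      have h3 := neg_abs_le (b * (v ⬝ᵥ a))
      rw [abs_mul] at h3
      linarith
    have h4 := mul_le_mul_of_nonneg_left h2 hlam
    have h5 : b ^ 2 = |b| ^ 2 := (sq_abs b).symm
    nlinarith [hmin', h4, h5]
  · positivity
end

section
/- Let J be a real n×n matrix, let λ ≥ 0 be the smallest eigenvalue of JᵀJ (so that aᵀ JᵀJ a ≥ λ‖a‖² for all a ∈ ℝⁿ), and let v be a unit vector with JᵀJ v = λ v. Then the (n+1)×(n+1) block matrix M = [[JᵀJ, JᵀJ v], [vᵀ JᵀJ, λ]] is symmetric positive semi-definite, i.e., M is symmetric and (aᵀ, b) M (a, b)ᵀ ≥ 0 for all (a, b) ∈ ℝⁿ × ℝ. -/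
open Matrix

theorem sumElim_dotProduct_fromBlocks_replicate_mulVec {m ι α : Type*} [Fintype m] [Fintype ι]
    [Unique ι] [DecidableEq ι] [CommRing α] (A : Matrix m m α) (u w : m → α) (d : α)
    (a : m → α) (b : α) :
    Sum.elim a (fun _ : ι => b) ⬝ᵥ
        fromBlocks A (replicateCol ι u) (replicateRow ι w) (d • 1) *ᵥ Sum.elim a (fun _ => b) =
      a ⬝ᵥ A *ᵥ a + b * (a ⬝ᵥ u) + b * (w ⬝ᵥ a) + d * b * b := by
  have hcol : replicateCol ι u *ᵥ (fun _ => b) = b • u := by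
    ext i
    simp [mulVec, dotProduct, mul_comm]
  rw [fromBlocks_mulVec, sumElim_dotProduct_sumElim]
  simp only [Sum.elim_comp_inl, Sum.elim_comp_inr, hcol, replicateRow_mulVec_eq_const,
    smul_mulVec, one_mulVec, dotProduct_add, dotProduct_smul, smul_eq_mul]
  simp only [dotProduct, Fintype.sum_unique, Function.const_apply]
  ring

theorem dotProduct_add_smul_self {m α : Type*} [Fintype m] [CommRing α] (a v : m → α) (b : α) :
    (a + b • v) ⬝ᵥ (a + b • v) = a ⬝ᵥ a + 2 * b * (a ⬝ᵥ v) + b * b * (v ⬝ᵥ v) := by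
  simp only [add_dotProduct, dotProduct_add, smul_dotProduct, dotProduct_smul, smul_eq_mul,
    dotProduct_comm v a]
  ring

theorem Matrix.IsSymm.vecMul_eq_mulVec {m α : Type*} [Fintype m] [CommSemiring α]
    {A : Matrix m m α} (hA : A.IsSymm) (v : m → α) : v ᵥ* A = A *ᵥ v := by
  rw [← mulVec_transpose, hA.eq]

/-- The inflated coefficient matrix `M = [[JᵀJ, JᵀJ v], [vᵀJᵀJ, λ]]` of the
paper's inflation process is symmetric positive semi-definite, where `λ ≥ 0` is
the smallest eigenvalue of `JᵀJ` and `v` a corresponding unit eigenvector. -/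
theorem inflated_matrix_posSemidef (n : ℕ)
    (J : Matrix (Fin n) (Fin n) ℝ) (lam : ℝ) (hlam : 0 ≤ lam)
    (hmin : ∀ a : Fin n → ℝ, lam * (a ⬝ᵥ a) ≤ a ⬝ᵥ (Jᵀ * J).mulVec a)
    (v : Fin n → ℝ) (hv : v ⬝ᵥ v = 1)
    (hev : (Jᵀ * J).mulVec v = lam • v) :
    (Matrix.fromBlocks (Jᵀ * J) (Matrix.replicateCol (Fin 1) ((Jᵀ * J).mulVec v))
        (Matrix.replicateRow (Fin 1) (Matrix.vecMul v (Jᵀ * J)))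
        (lam • (1 : Matrix (Fin 1) (Fin 1) ℝ))).IsSymm ∧
      ∀ (a : Fin n → ℝ) (b : ℝ),
        0 ≤ (Sum.elim a (fun _ : Fin 1 => b)) ⬝ᵥ
            (Matrix.fromBlocks (Jᵀ * J) (Matrix.replicateCol (Fin 1) ((Jᵀ * J).mulVec v))
              (Matrix.replicateRow (Fin 1) (Matrix.vecMul v (Jᵀ * J)))
              (lam • (1 : Matrix (Fin 1) (Fin 1) ℝ))).mulVec
              (Sum.elim a (fun _ : Fin 1 => b)) := by
  have hA : (Jᵀ * J).IsSymm := isSymm_transpose_mul_self J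
  rw [hA.vecMul_eq_mulVec]
  refine ⟨hA.fromBlocks (transpose_replicateCol _) (isSymm_one.smul lam), fun a b => ?_⟩
  rw [sumElim_dotProduct_fromBlocks_replicate_mulVec, hev, dotProduct_comm (lam • v) a]
  -- the form splits as `aᵀ(JᵀJ - λ)a + λ‖a + b v‖²`, a sum of two nonnegative terms
  have hsplit : lam * ((a + b • v) ⬝ᵥ (a + b • v)) ≤
      a ⬝ᵥ (Jᵀ * J) *ᵥ a + b * (a ⬝ᵥ lam • v) + b * (a ⬝ᵥ lam • v) + lam * b * b := by
    rw [dotProduct_add_smul_self, hv, dotProduct_smul, smul_eq_mul]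
    linarith [hmin a]
  exact (mul_nonneg hlam (dotProduct_self_star_nonneg _)).trans hsplit
end

section
/- Let p_b, b ∈ ℝ with b ≠ 0, let r > 0, let g : ℝ → ℝ be continuous at 0 with g(0) = b, and define p(λ) = p_b + λ^r g(λ) for λ > 0. Then for any constants k₁, k₂ ∈ (0, 1) with k₁ ≠ k₂, the limit as λ → 0⁺ of the ratio (p(λ) − p(k₁λ)) / (p(λ) − p(k₂λ)) exists and equals (1 − k₁^r) / (1 − k₂^r). -/
open Filter Topology

/-- The ratio used in the paper's Puiseux exponent-recovery step: if
`p(λ) = p_b + λ^r g(λ)` with `g` continuous at `0`, `g(0) = b ≠ 0` and `r > 0`,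
then for constants `k₁, k₂ ∈ (0,1)`, `k₁ ≠ k₂`, the ratio
`(p(λ) − p(k₁λ))/(p(λ) − p(k₂λ))` tends to `(1 − k₁^r)/(1 − k₂^r)` as
`λ → 0⁺`. -/
theorem puiseux_ratio_limit (p_b b r : ℝ) (hb : b ≠ 0) (hr : 0 < r)
    (g : ℝ → ℝ) (hg : ContinuousAt g 0) (hg0 : g 0 = b)
    (p : ℝ → ℝ) (hp : ∀ lam : ℝ, 0 < lam → p lam = p_b + lam ^ r * g lam)
    (k₁ k₂ : ℝ) (hk₁ : k₁ ∈ Set.Ioo (0 : ℝ) 1) (hk₂ : k₂ ∈ Set.Ioo (0 : ℝ) 1)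
    (hk : k₁ ≠ k₂) :
    Tendsto (fun lam : ℝ => (p lam - p (k₁ * lam)) / (p lam - p (k₂ * lam)))
      (𝓝[>] (0 : ℝ)) (𝓝 ((1 - k₁ ^ r) / (1 - k₂ ^ r))) := by
  obtain ⟨hk₁0, hk₁1⟩ := hk₁
  obtain ⟨hk₂0, hk₂1⟩ := hk₂
  -- g λ tends to b, g (k * λ) tends to b
  have hgb : Tendsto g (𝓝[>] (0:ℝ)) (𝓝 b) := by
    have := hg.tendsto.mono_left (nhdsWithin_le_nhds : 𝓝[>] (0:ℝ) ≤ 𝓝 0)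
    rwa [hg0] at this
  have hgk : ∀ k : ℝ, 0 < k → Tendsto (fun lam => g (k * lam)) (𝓝[>] (0:ℝ)) (𝓝 b) := by
    intro k hk0
    have hmul : Tendsto (fun lam : ℝ => k * lam) (𝓝[>] (0:ℝ)) (𝓝 (0:ℝ)) := by
      have : Tendsto (fun lam : ℝ => k * lam) (𝓝 (0:ℝ)) (𝓝 (k * 0)) :=
        (continuous_const.mul continuous_id).tendsto 0
      simpa using this.mono_left nhdsWithin_le_nhds
    have := (hg.tendsto.comp hmul)
    rwa [hg0] at this
  have hnum : Tendsto (fun lam => g lam - k₁ ^ r * g (k₁ * lam)) (𝓝[>] (0:ℝ))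
      (𝓝 (b * (1 - k₁ ^ r))) := by
    have := hgb.sub ((hgk k₁ hk₁0).const_mul (k₁ ^ r))
    convert this using 2
    ring
  have hden : Tendsto (fun lam => g lam - k₂ ^ r * g (k₂ * lam)) (𝓝[>] (0:ℝ))
      (𝓝 (b * (1 - k₂ ^ r))) := by
    have := hgb.sub ((hgk k₂ hk₂0).const_mul (k₂ ^ r))
    convert this using 2
    ring
  have hk2ne : (1 : ℝ) - k₂ ^ r ≠ 0 := by
    have : k₂ ^ r < 1 := Real.rpow_lt_one (le_of_lt hk₂0) hk₂1 hr
    linarith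
  have hdenne : b * (1 - k₂ ^ r) ≠ 0 := mul_ne_zero hb hk2ne
  have hlim : Tendsto (fun lam => (g lam - k₁ ^ r * g (k₁ * lam)) /
      (g lam - k₂ ^ r * g (k₂ * lam))) (𝓝[>] (0:ℝ))
      (𝓝 ((b * (1 - k₁ ^ r)) / (b * (1 - k₂ ^ r)))) := hnum.div hden hdenne
  rw [mul_div_mul_left _ _ hb] at hlim
  refine hlim.congr' ?_
  filter_upwards [self_mem_nhdsWithin] with lam (hlam : 0 < lam)
  have hrw : ∀ k : ℝ, 0 < k →
      p lam - p (k * lam) = lam ^ r * (g lam - k ^ r * g (k * lam)) := by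
    intro k hk0
    rw [hp lam hlam, hp (k * lam) (mul_pos hk0 hlam),
      Real.mul_rpow (le_of_lt hk0) (le_of_lt hlam)]
    ring
  rw [hrw k₁ hk₁0, hrw k₂ hk₂0,
    mul_div_mul_left _ _ (ne_of_gt (Real.rpow_pos_of_pos hlam r))]
end
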